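/- Let Ω ⊆ ℝⁿ be an open set, 0 < s < 1, and f ∈ W^{s,n/s}(Ω). Then for every x ∈ Ω, lim_{ε→0⁺} (1/|B_ε(x)|) ∫_{B_ε(x)} |f(y) − f_ε(x)|^{n/s} dy = 0, where for 0 < ε < dist(x, ∂Ω), f_ε(x) := ∫ φ_ε(z) f(x−z) dz is the mollification of f at x. -/

import Mathlib

open MeasureTheory Metric Set Filter Topology
open scoped ENNReal

noncomputable section

/-- Euclidean n-space. -/
abbrev Rn (n : ℕ) : Type := EuclideanSpace ℝ (Fin n)

/-- The i-th standard basis vector. -/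
def eVec (n : ℕ) (i : Fin n) : Rn n := EuclideanSpace.single i 1

/-- Partial derivative in the i-th coordinate direction. -/
def pderiv' {n : ℕ} {E : Type} [NormedAddCommGroup E] [NormedSpace ℝ E]
    (i : Fin n) (f : Rn n → E) (x : Rn n) : E :=
  fderiv ℝ f x (eVec n i)

/-- A smooth compactly supported test function with support inside Ω. -/
def IsTestFun {n : ℕ} (Ω : Set (Rn n)) (φ : Rn n → ℝ) : Prop :=
  ContDiff ℝ (⊤ : ℕ∞) φ ∧ HasCompactSupport φ ∧ tsupport φ ⊆ Ω

/-- The Gagliardo fractional seminorm [f]_{W^{s,p}(Ω)} (valued in ℝ≥0∞). -/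
def gagliardo {n : ℕ} {E : Type} [NormedAddCommGroup E]
    (s p : ℝ) (Ω : Set (Rn n)) (f : Rn n → E) : ℝ≥0∞ :=
  (∫⁻ x in Ω, ∫⁻ y in Ω,
    ENNReal.ofReal (‖f x - f y‖ ^ p / ‖x - y‖ ^ ((n : ℝ) + s * p))) ^ (1 / p)

/-- Membership in the fractional Sobolev space W^{s,p}(Ω):
f ∈ L^p(Ω) with finite Gagliardo seminorm. -/
def MemWsp {n : ℕ} {E : Type} [NormedAddCommGroup E]
    (s p : ℝ) (Ω : Set (Rn n)) (f : Rn n → E) : Prop :=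
  MemLp f (ENNReal.ofReal p) (volume.restrict Ω) ∧ gagliardo s p Ω f < ⊤

/-- A standard mollifier: smooth, supported in the closed unit ball, nonnegative,
with total integral 1. -/
structure IsMollifier {n : ℕ} (ψ : Rn n → ℝ) : Prop where
  smooth : ContDiff ℝ (⊤ : ℕ∞) ψ
  supp : tsupport ψ ⊆ Metric.closedBall 0 1
  nonneg : ∀ x, 0 ≤ ψ x
  integral_one : ∫ x, ψ x = 1

/-- Mollification f ∗ ψ_ε, where ψ_ε(z) := ε^{-n} ψ(z/ε). -/
def mollify {n : ℕ} {E : Type} [NormedAddCommGroup E] [NormedSpace ℝ E]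
    (ψ : Rn n → ℝ) (ε : ℝ) (f : Rn n → E) (x : Rn n) : E :=
  ∫ z, ((ε ^ n)⁻¹ * ψ (ε⁻¹ • z)) • f (x - z)

/-- Mollification of the extension of f by zero outside Ω. -/
def mollifyOn {n : ℕ} {E : Type} [NormedAddCommGroup E] [NormedSpace ℝ E]
    (Ω : Set (Rn n)) (ψ : Rn n → ℝ) (ε : ℝ) (f : Rn n → E) : Rn n → E :=
  mollify ψ ε (Ω.indicator f)

/-- Pointwise Jacobian determinant of a map ℝ² → ℝ². -/
def jacDet2 (g : Rn 2 → Rn 2) (x : Rn 2) : ℝ :=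
  pderiv' 0 (fun y => g y 0) x * pderiv' 1 (fun y => g y 1) x -
  pderiv' 1 (fun y => g y 0) x * pderiv' 0 (fun y => g y 1) x

/-- Pointwise Jacobian determinant of a map ℝⁿ → ℝⁿ. -/
def jacDetN {n : ℕ} (g : Rn n → Rn n) (x : Rn n) : ℝ :=
  (Matrix.of fun i j : Fin n => pderiv' j (fun y => g y i) x).det

/-- The Jacobian matrix ∇v of a map ℝ² → ℝ³ (3×2 matrix of partial derivatives). -/
def gradMat (v : Rn 2 → Rn 3) (x : Rn 2) : Matrix (Fin 3) (Fin 2) ℝ :=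
  Matrix.of fun m j => pderiv' j (fun y => v y m) x

/-- The pullback metric (∇v)ᵀ ∇v. -/
def pullbackMetric (v : Rn 2 → Rn 3) (x : Rn 2) : Matrix (Fin 2) (Fin 2) ℝ :=
  Matrix.transpose (gradMat v x) * gradMat v x

/-- Cross product in ℝ³. -/
def cross3 (a b : Rn 3) : Rn 3 :=
  (EuclideanSpace.equiv (Fin 3) ℝ).symm
    ![a 1 * b 2 - a 2 * b 1, a 2 * b 0 - a 0 * b 2, a 0 * b 1 - a 1 * b 0]

/-- Unit normal of an immersion ℝ² → ℝ³. -/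
def unitNormal (v : Rn 2 → Rn 3) (x : Rn 2) : Rn 3 :=
  ‖cross3 (pderiv' 0 v x) (pderiv' 1 v x)‖⁻¹ • cross3 (pderiv' 0 v x) (pderiv' 1 v x)

/-- Second fundamental form II_{ij} = ∂_{ij} v · n of an immersion ℝ² → ℝ³. -/
def secondFF (v : Rn 2 → Rn 3) (i j : Fin 2) (x : Rn 2) : ℝ :=
  inner ℝ (pderiv' i (fun y => pderiv' j v y) x) (unitNormal v x)

/-- F(ε) = o(ε^t) as ε → 0⁺ (with F valued in ℝ≥0∞). -/
def LittleO (F : ℝ → ℝ≥0∞) (t : ℝ) : Prop :=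
  Tendsto (fun ε => F ε / ENNReal.ofReal (ε ^ t)) (𝓝[>] (0:ℝ)) (𝓝 0)

/-- f belongs locally (on Ω) to the little Hölder space c^{0,α}: around every point
there is a ball on which f can be approximated arbitrarily well by smooth functions
in the C^{0,α} norm. -/
def LittleHolderLocOn {n : ℕ} {E : Type} [NormedAddCommGroup E] [NormedSpace ℝ E]
    (α : ℝ) (f : Rn n → E) (Ω : Set (Rn n)) : Prop :=
  ∀ x ∈ Ω, ∃ r > 0, ball x r ⊆ Ω ∧
    ∀ δ > 0, ∃ g : Rn n → E, ContDiff ℝ (⊤ : ℕ∞) g ∧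
      (∀ y ∈ ball x r, ‖f y - g y‖ ≤ δ) ∧
      ∀ y ∈ ball x r, ∀ z ∈ ball x r, ‖(f y - g y) - (f z - g z)‖ ≤ δ * ‖y - z‖ ^ α

/-- The line through x with direction d. -/
def lineThrough {n : ℕ} (x d : Rn n) : Set (Rn n) := {y | ∃ t : ℝ, y = x + t • d}

/-- g is the weak (distributional) i-th partial derivative of f on Ω. -/
def IsWeakDerivOn {n : ℕ} (Ω : Set (Rn n)) (i : Fin n) (f g : Rn n → ℝ) : Prop :=
  ∀ φ : Rn n → ℝ, IsTestFun Ω φ →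
    ∫ x in Ω, f x * pderiv' i φ x = - ∫ x in Ω, g x * φ x

/-- A bounded smooth domain: a bounded open sublevel set of a smooth function whose
gradient does not vanish on the boundary. -/
def IsSmoothBoundedDomain {n : ℕ} (Ω : Set (Rn n)) : Prop :=
  IsOpen Ω ∧ Bornology.IsBounded Ω ∧ ∃ F : Rn n → ℝ, ContDiff ℝ (⊤ : ℕ∞) F ∧
    Ω = {x | F x < 0} ∧ ∀ x ∈ frontier Ω, fderiv ℝ F x ≠ 0

/-!
Write `p = n / s` and `ψ_ε(z) = ε⁻ⁿ ψ(z / ε)`. Since `ψ_ε(x - ·)` is a probability density supported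
in `B̄_ε(x) ⊆ Ω`, Jensen's inequality gives, for every `y`,
`|f y - f_ε(x)|^p ≤ ∫ ψ_ε(x - w) |f y - f w|^p dw ≤ ‖ψ‖_∞ ε⁻ⁿ ∫_{B̄_ε(x)} |f y - f w|^p dw`.
For `y, w ∈ B̄_ε(x)` we have `|y - w| ≤ 2ε`, so `|f y - f w|^p` is at most `(2ε)^(n + sp)` times
the Gagliardo integrand. As `n + sp = 2n`, the powers of `ε` cancel against `|B_ε(x)|⁻¹ ε⁻ⁿ`:
the mean oscillation is bounded by a constant times the Gagliardo energy of `f` on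
`B̄_ε(x) × B̄_ε(x)`, which tends to `0` by absolute continuity of the finite Gagliardo integral.
-/

section Integral

variable {α : Type*} [MeasurableSpace α] {μ : Measure α}

theorem rpow_lintegral_le_lintegral_rpow [IsProbabilityMeasure μ] {p : ℝ} (hp : 1 ≤ p)
    {g : α → ℝ≥0∞} (hg : AEMeasurable g μ) :
    (∫⁻ a, g a ∂μ) ^ p ≤ ∫⁻ a, g a ^ p ∂μ := by
  rcases hp.eq_or_lt with rfl | hp
  · simp
  have hHolder : ∫⁻ a, g a ∂μ ≤ (∫⁻ a, g a ^ p ∂μ) ^ (1 / p) := by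
    simpa using ENNReal.lintegral_mul_le_Lp_mul_Lq μ (Real.HolderConjugate.conjExponent hp)
      hg aemeasurable_const (g := fun _ => 1)
  calc (∫⁻ a, g a ∂μ) ^ p ≤ ((∫⁻ a, g a ^ p ∂μ) ^ (1 / p)) ^ p :=
        ENNReal.rpow_le_rpow hHolder (by linarith)
    _ = ∫⁻ a, g a ^ p ∂μ := by
        rw [← ENNReal.rpow_mul, one_div_mul_cancel (by linarith), ENNReal.rpow_one]

theorem enorm_sub_integral_smul_rpow_le {E : Type*} [NormedAddCommGroup E] [NormedSpace ℝ E]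
    [CompleteSpace E] {ρ : α → ℝ} (hρ_nonneg : ∀ a, 0 ≤ ρ a) (hρ_int : Integrable ρ μ)
    (hρ_one : ∫ a, ρ a ∂μ = 1) {g : α → E} (hg : AEStronglyMeasurable g μ)
    (hρg : Integrable (fun a => ρ a • g a) μ) {p : ℝ} (hp : 1 ≤ p) (v : E) :
    ‖v - ∫ a, ρ a • g a ∂μ‖ₑ ^ p ≤ ∫⁻ a, ENNReal.ofReal (ρ a) * ‖v - g a‖ₑ ^ p ∂μ := by
  set ν := μ.withDensity fun a => ENNReal.ofReal (ρ a)
  have hρ_meas : AEMeasurable (fun a => ENNReal.ofReal (ρ a)) μ :=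
    hρ_int.aemeasurable.ennreal_ofReal
  have hν : IsProbabilityMeasure ν := ⟨by
    rw [withDensity_apply _ MeasurableSet.univ, Measure.restrict_univ,
      ← ofReal_integral_eq_lintegral_ofReal hρ_int (ae_of_all _ hρ_nonneg), hρ_one,
      ENNReal.ofReal_one]⟩
  have hdiff : AEMeasurable (fun a => ‖v - g a‖ₑ) μ :=
    (aestronglyMeasurable_const.sub hg).enorm
  have hdiffν : AEMeasurable (fun a => ‖v - g a‖ₑ) ν :=
    hdiff.mono_ac (withDensity_absolutelyContinuous _ _)
  have hmean : v - ∫ a, ρ a • g a ∂μ = ∫ a, ρ a • (v - g a) ∂μ := by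
    simp_rw [smul_sub]
    rw [integral_sub (hρ_int.smul_const v) hρg, integral_smul_const, hρ_one, one_smul]
  calc ‖v - ∫ a, ρ a • g a ∂μ‖ₑ ^ p
      ≤ (∫⁻ a, ‖v - g a‖ₑ ∂ν) ^ p := by
        gcongr
        rw [hmean, lintegral_withDensity_eq_lintegral_mul₀ hρ_meas hdiff]
        refine (enorm_integral_le_lintegral_enorm _).trans_eq (lintegral_congr fun a => ?_)
        rw [enorm_smul, Real.enorm_of_nonneg (hρ_nonneg a)]
        rfl
    _ ≤ ∫⁻ a, ‖v - g a‖ₑ ^ p ∂ν := rpow_lintegral_le_lintegral_rpow hp hdiffν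
    _ = ∫⁻ a, ENNReal.ofReal (ρ a) * ‖v - g a‖ₑ ^ p ∂μ :=
        lintegral_withDensity_eq_lintegral_mul₀ hρ_meas (hdiff.pow_const p)

theorem integral_abs_rpow_le_toReal_lintegral {p : ℝ} (hp : 0 ≤ p) (h : α → ℝ) :
    ∫ a, |h a| ^ p ∂μ ≤ (∫⁻ a, ‖h a‖ₑ ^ p ∂μ).toReal := by
  refine (le_abs_self _).trans ?_
  rw [← Real.norm_eq_abs]
  refine (norm_integral_le_lintegral_norm _).trans_eq ?_
  congr 1
  refine lintegral_congr fun a => ?_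
  rw [Real.norm_eq_abs, abs_of_nonneg (by positivity),
    ← ENNReal.ofReal_rpow_of_nonneg (abs_nonneg _) hp, Real.enorm_eq_ofReal_abs]

end Integral

section Mollifier

variable {n : ℕ} {E : Type} [NormedAddCommGroup E] [NormedSpace ℝ E] {ψ : Rn n → ℝ} {ε : ℝ}

def rescaledMollifier (ψ : Rn n → ℝ) (ε : ℝ) (z : Rn n) : ℝ :=
  (ε ^ n)⁻¹ * ψ (ε⁻¹ • z)

theorem mollify_eq_integral_rescaledMollifier (g : Rn n → E) (x : Rn n) :
    mollify ψ ε g x = ∫ w, rescaledMollifier ψ ε (x - w) • g w := by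
  rw [mollify, ← integral_sub_left_eq_self _ volume x]
  simp only [sub_sub_cancel, rescaledMollifier]

theorem rescaledMollifier_le {M : ℝ} (hM : ∀ z, ψ z ≤ M) (hε : 0 < ε) (z : Rn n) :
    rescaledMollifier ψ ε z ≤ M / ε ^ n := by
  rw [rescaledMollifier, div_eq_inv_mul]
  exact mul_le_mul_of_nonneg_left (hM _) (inv_nonneg.2 (pow_nonneg hε.le n))

namespace IsMollifier

theorem hasCompactSupport (hψ : IsMollifier ψ) : HasCompactSupport ψ :=
  (isCompact_closedBall 0 1).of_isClosed_subset (isClosed_tsupport ψ) hψ.supp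

theorem continuous_rescaledMollifier (hψ : IsMollifier ψ) :
    Continuous (rescaledMollifier ψ ε) :=
  continuous_const.mul (hψ.smooth.continuous.comp (continuous_const_smul ε⁻¹))

theorem rescaledMollifier_nonneg (hψ : IsMollifier ψ) (hε : 0 < ε) (z : Rn n) :
    0 ≤ rescaledMollifier ψ ε z :=
  mul_nonneg (inv_nonneg.2 (pow_nonneg hε.le n)) (hψ.nonneg _)

theorem rescaledMollifier_eq_zero (hψ : IsMollifier ψ) (hε : 0 < ε) {z : Rn n} (hz : ε < ‖z‖) :
    rescaledMollifier ψ ε z = 0 := by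
  have hout : ε⁻¹ • z ∉ tsupport ψ := fun h => by
    have h1 : ε⁻¹ * ‖z‖ ≤ 1 := by
      simpa [norm_smul, abs_of_pos hε] using hψ.supp h
    rw [inv_mul_le_iff₀ hε, mul_one] at h1
    linarith
  simp [rescaledMollifier, image_eq_zero_of_notMem_tsupport hout]

theorem hasCompactSupport_rescaledMollifier (hψ : IsMollifier ψ) (hε : 0 < ε) :
    HasCompactSupport (rescaledMollifier ψ ε) :=
  HasCompactSupport.intro (isCompact_closedBall 0 ε) fun z hz =>
    hψ.rescaledMollifier_eq_zero hε (by simpa using hz)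

theorem integral_rescaledMollifier (hψ : IsMollifier ψ) (hε : 0 < ε) :
    ∫ z, rescaledMollifier ψ ε z = 1 := by
  have hεn : 0 < ε ^ n := pow_pos hε n
  simp only [rescaledMollifier]
  rw [integral_const_mul, Measure.integral_comp_smul, finrank_euclideanSpace_fin,
    hψ.integral_one, smul_eq_mul, mul_one, inv_pow, inv_inv, abs_of_pos hεn,
    inv_mul_cancel₀ hεn.ne']

theorem enorm_sub_mollify_rpow_le [CompleteSpace E] (hψ : IsMollifier ψ) {M : ℝ}
    (hM : ∀ z, ψ z ≤ M) (hε : 0 < ε) {g : Rn n → E} (hg : LocallyIntegrable g volume)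
    {p : ℝ} (hp : 1 ≤ p) (v : E) (x : Rn n) :
    ‖v - mollify ψ ε g x‖ₑ ^ p ≤
      ENNReal.ofReal (M / ε ^ n) * ∫⁻ w in closedBall x ε, ‖v - g w‖ₑ ^ p := by
  set ρ : Rn n → ℝ := fun w => rescaledMollifier ψ ε (x - w)
  have hρ_cont : Continuous ρ :=
    hψ.continuous_rescaledMollifier.comp (continuous_const.sub continuous_id)
  have hρ_supp : HasCompactSupport ρ :=
    (hψ.hasCompactSupport_rescaledMollifier hε).comp_homeomorph (Homeomorph.subLeft x)
  have hρ_int : Integrable ρ volume := hρ_cont.integrable_of_hasCompactSupport hρ_supp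
  have hρ_one : ∫ w, ρ w = 1 := by
    rw [integral_sub_left_eq_self (rescaledMollifier ψ ε) volume x,
      hψ.integral_rescaledMollifier hε]
  rw [mollify_eq_integral_rescaledMollifier]
  refine (enorm_sub_integral_smul_rpow_le (hψ.rescaledMollifier_nonneg hε <| x - ·) hρ_int
    hρ_one hg.aestronglyMeasurable
    (hg.integrable_smul_left_of_hasCompactSupport hρ_cont hρ_supp) hp v).trans ?_
  rw [← lintegral_const_mul' _ _ ENNReal.ofReal_ne_top,
    ← lintegral_indicator measurableSet_closedBall]
  refine lintegral_mono fun w => ?_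
  by_cases hw : w ∈ closedBall x ε
  · rw [indicator_of_mem hw]
    gcongr
    exact rescaledMollifier_le hM hε _
  · have hfar : ε < ‖x - w‖ := by
      rwa [mem_closedBall, not_le, dist_eq_norm, ← norm_neg, neg_sub] at hw
    simp [hψ.rescaledMollifier_eq_zero hε hfar]

end IsMollifier

end Mollifier

theorem tendsto_measure_closedBall_nhdsGT_zero {α : Type*} [MetricSpace α] [MeasurableSpace α]
    [OpensMeasurableSpace α] {μ : Measure α} [NullSingletonClass μ] {x : α}
    (hfin : ∃ r > 0, μ (closedBall x r) ≠ ∞) :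
    Tendsto (fun ε => μ (closedBall x ε)) (𝓝[>] 0) (𝓝 0) := by
  have h := tendsto_measure_biInter_gt (μ := μ) (s := closedBall x) (a := 0)
    (fun _ _ => measurableSet_closedBall.nullMeasurableSet)
    (fun _ _ _ hij => closedBall_subset_closedBall hij) hfin
  rwa [biInter_gt_closedBall, closedBall_zero, measure_singleton] at h

section Gagliardo

variable {n : ℕ} {E : Type} [NormedAddCommGroup E] {s p : ℝ}

def gagliardoEnergy (s p : ℝ) (A : Set (Rn n)) (f : Rn n → E) : ℝ≥0∞ :=
  ∫⁻ x in A, ∫⁻ y in A, ENNReal.ofReal (‖f x - f y‖ ^ p / ‖x - y‖ ^ ((n : ℝ) + s * p))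

theorem gagliardoEnergy_ne_top {Ω : Set (Rn n)} {f : Rn n → E} (hp : 0 < p)
    (hf : gagliardo s p Ω f < ⊤) : gagliardoEnergy s p Ω f ≠ ⊤ := fun h => by
  rw [gagliardo, ← gagliardoEnergy, h, ENNReal.top_rpow_of_pos (one_div_pos.2 hp)] at hf
  exact lt_irrefl _ hf

theorem gagliardoEnergy_mono {A B : Set (Rn n)} (hAB : A ⊆ B) (f : Rn n → E) :
    gagliardoEnergy s p A f ≤ gagliardoEnergy s p B f :=
  (lintegral_mono_set hAB).trans (lintegral_mono fun _ => lintegral_mono_set hAB)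

theorem enorm_sub_rpow_le_mul_gagliardo_integrand (hs : 0 ≤ s) (hp : 0 < p) (f : Rn n → E)
    {x y : Rn n} {D : ℝ} (hxy : ‖x - y‖ ≤ D) :
    ‖f x - f y‖ₑ ^ p ≤ ENNReal.ofReal (D ^ ((n : ℝ) + s * p)) *
      ENNReal.ofReal (‖f x - f y‖ ^ p / ‖x - y‖ ^ ((n : ℝ) + s * p)) := by
  rcases eq_or_ne x y with rfl | hne
  · simp [ENNReal.zero_rpow_of_pos hp]
  set q : ℝ := (n : ℝ) + s * p
  have hq : 0 ≤ q := by positivity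
  have hd : 0 < ‖x - y‖ ^ q := Real.rpow_pos_of_pos (norm_pos_iff.2 (sub_ne_zero.2 hne)) q
  rw [← ofReal_norm, ENNReal.ofReal_rpow_of_nonneg (norm_nonneg _) hp.le,
    ← ENNReal.ofReal_mul (Real.rpow_nonneg (by linarith [norm_nonneg (x - y)]) q)]
  refine ENNReal.ofReal_le_ofReal ?_
  calc ‖f x - f y‖ ^ p = ‖x - y‖ ^ q * (‖f x - f y‖ ^ p / ‖x - y‖ ^ q) := by field_simp
    _ ≤ D ^ q * (‖f x - f y‖ ^ p / ‖x - y‖ ^ q) := by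
      gcongr

theorem lintegral_lintegral_enorm_sub_rpow_le (hs : 0 ≤ s) (hp : 0 < p) {A : Set (Rn n)}
    (hA : MeasurableSet A) {D : ℝ} (hD : ∀ x ∈ A, ∀ y ∈ A, ‖x - y‖ ≤ D) (f : Rn n → E) :
    ∫⁻ x in A, ∫⁻ y in A, ‖f x - f y‖ₑ ^ p ≤
      ENNReal.ofReal (D ^ ((n : ℝ) + s * p)) * gagliardoEnergy s p A f := by
  rw [gagliardoEnergy, ← lintegral_const_mul' _ _ ENNReal.ofReal_ne_top]
  refine setLIntegral_mono' hA fun x hx => ?_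
  rw [← lintegral_const_mul' _ _ ENNReal.ofReal_ne_top]
  exact setLIntegral_mono' hA fun y hy =>
    enorm_sub_rpow_le_mul_gagliardo_integrand hs hp f (hD x hx y hy)

theorem tendsto_gagliardoEnergy_closedBall [NeZero n] {Ω : Set (Rn n)}
    {x : Rn n} (hx : Ω ∈ 𝓝 x) {f : Rn n → E} (hf : AEStronglyMeasurable f (volume.restrict Ω))
    (hfin : gagliardoEnergy s p Ω f ≠ ⊤) :
    Tendsto (fun ε => gagliardoEnergy s p (closedBall x ε) f) (𝓝[>] 0) (𝓝 0) := by
  set μ := volume.restrict Ω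
  set G : Rn n × Rn n → ℝ≥0∞ := fun q =>
    ENNReal.ofReal (‖f q.1 - f q.2‖ ^ p / ‖q.1 - q.2‖ ^ ((n : ℝ) + s * p))
  have hG : AEMeasurable G (μ.prod μ) :=
    (((hf.comp_fst.sub hf.comp_snd).norm.aemeasurable.pow_const p).div
      ((measurable_fst.sub measurable_snd).norm.pow_const _).aemeasurable).ennreal_ofReal
  have hsub : ∀ A ⊆ Ω, MeasurableSet A →
      gagliardoEnergy s p A f = ∫⁻ q in A ×ˢ A, G q ∂(μ.prod μ) := fun A hAΩ hA => by
    have hμA : μ.restrict A = volume.restrict A := by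
      rw [Measure.restrict_restrict hA, inter_eq_left.2 hAΩ]
    rw [← Measure.prod_restrict, lintegral_prod _ (hG.mono_measure ?_), hμA]
    · rfl
    rw [Measure.prod_restrict]
    exact Measure.restrict_le_self
  obtain ⟨r, hr, hrΩ⟩ := nhds_basis_closedBall.mem_iff.1 hx
  have hball : Tendsto (fun ε => μ (closedBall x ε)) (𝓝[>] 0) (𝓝 0) :=
    tendsto_measure_closedBall_nhdsGT_zero
      ⟨r, hr, ((Measure.restrict_apply_le _ _).trans_lt measure_closedBall_lt_top).ne⟩
  have hprod : Tendsto ((μ.prod μ) ∘ fun ε => closedBall x ε ×ˢ closedBall x ε)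
      (𝓝[>] 0) (𝓝 0) := by
    simpa [Function.comp_def, Measure.prod_prod] using
      ENNReal.Tendsto.mul hball (Or.inr ENNReal.zero_ne_top) hball (Or.inr ENNReal.zero_ne_top)
  have hGfin : ∫⁻ q, G q ∂(μ.prod μ) ≠ ⊤ := by
    rwa [lintegral_prod _ hG]
  refine (tendsto_setLIntegral_zero hGfin hprod).congr' ?_
  filter_upwards [Ioo_mem_nhdsGT hr] with ε hε
  exact (hsub _ ((closedBall_subset_closedBall hε.2.le).trans hrΩ) measurableSet_closedBall).symm

end Gagliardo

section Oscillation

variable {n : ℕ} {ψ : Rn n → ℝ} {ε s M : ℝ} {Ω : Set (Rn n)} {x : Rn n}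

theorem lintegral_enorm_sub_mollifyOn_rpow_le {E : Type} [NormedAddCommGroup E]
    [NormedSpace ℝ E] [CompleteSpace E] (hψ : IsMollifier ψ) (hM : ∀ z, ψ z ≤ M)
    (hε : 0 < ε) (hS : closedBall x ε ⊆ Ω) {f : Rn n → E}
    (hf : LocallyIntegrable (Ω.indicator f) volume) (hs : 0 ≤ s) {p : ℝ} (hp : 1 ≤ p) :
    ∫⁻ y in ball x ε, ‖f y - mollifyOn Ω ψ ε f x‖ₑ ^ p ≤
      ENNReal.ofReal (M / ε ^ n) * ENNReal.ofReal ((2 * ε) ^ ((n : ℝ) + s * p)) *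
        gagliardoEnergy s p (closedBall x ε) f := by
  have hdiam : ∀ y ∈ closedBall x ε, ∀ w ∈ closedBall x ε, ‖y - w‖ ≤ 2 * ε := fun y hy w hw => by
    rw [← dist_eq_norm]
    linarith [dist_triangle_right y w x, mem_closedBall.1 hy, mem_closedBall.1 hw]
  have hpointwise : ∀ y, ‖f y - mollifyOn Ω ψ ε f x‖ₑ ^ p ≤
      ENNReal.ofReal (M / ε ^ n) * ∫⁻ w in closedBall x ε, ‖f y - f w‖ₑ ^ p := fun y => by
    refine (hψ.enorm_sub_mollify_rpow_le hM hε hf hp (f y) x).trans_eq ?_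
    congr 1
    refine setLIntegral_congr_fun measurableSet_closedBall fun w hw => ?_
    rw [indicator_of_mem (hS hw)]
  calc ∫⁻ y in ball x ε, ‖f y - mollifyOn Ω ψ ε f x‖ₑ ^ p
      ≤ ∫⁻ y in closedBall x ε, ‖f y - mollifyOn Ω ψ ε f x‖ₑ ^ p :=
        lintegral_mono_set ball_subset_closedBall
    _ ≤ ENNReal.ofReal (M / ε ^ n) *
          ∫⁻ y in closedBall x ε, ∫⁻ w in closedBall x ε, ‖f y - f w‖ₑ ^ p := by
        rw [← lintegral_const_mul' _ _ ENNReal.ofReal_ne_top]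
        exact lintegral_mono hpointwise
    _ ≤ _ := by
        rw [mul_assoc]
        gcongr
        exact lintegral_lintegral_enorm_sub_rpow_le hs (by linarith) measurableSet_closedBall
          hdiam f

theorem mean_oscillation_mollifyOn_le (hψ : IsMollifier ψ) (hM : ∀ z, ψ z ≤ M)
    (hε : 0 < ε) (hS : closedBall x ε ⊆ Ω) {f : Rn n → ℝ}
    (hf : LocallyIntegrable (Ω.indicator f) volume) (hs : 0 < s) (hsn : s ≤ n)
    (hfin : gagliardoEnergy s (n / s) (closedBall x ε) f ≠ ⊤) :
    (volume (ball x ε)).toReal⁻¹ *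
        ∫ y in ball x ε, |f y - mollifyOn Ω ψ ε f x| ^ ((n : ℝ) / s) ≤
      M * 4 ^ n / (volume (ball (0 : Rn n) 1)).toReal *
        (gagliardoEnergy s (n / s) (closedBall x ε) f).toReal := by
  set p : ℝ := n / s
  set c := mollifyOn Ω ψ ε f x
  set κ := (volume (ball (0 : Rn n) 1)).toReal
  have hp : 1 ≤ p := (one_le_div hs).2 hsn
  have hM0 : 0 ≤ M := (hψ.nonneg 0).trans (hM 0)
  have hκ : 0 < κ := ENNReal.toReal_pos (measure_ball_pos _ _ one_pos).ne' measure_ball_lt_top.ne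
  have hεn : 0 < ε ^ n := pow_pos hε n
  have hvol : (volume (ball x ε)).toReal = ε ^ n * κ := by
    rw [Measure.addHaar_ball_of_pos _ _ hε, finrank_euclideanSpace_fin, ENNReal.toReal_mul,
      ENNReal.toReal_ofReal hεn.le]
  have hexp : (2 * ε) ^ ((n : ℝ) + s * p) = 4 ^ n * (ε ^ n) ^ 2 := by
    rw [show (n : ℝ) + s * p = ((2 * n : ℕ) : ℝ) by simp only [p]; field_simp; push_cast; ring,
      Real.rpow_natCast, pow_mul, mul_pow]
    norm_num
    ring
  have hbound := lintegral_enorm_sub_mollifyOn_rpow_le hψ hM hε hS hf hs.le hp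
  calc (volume (ball x ε)).toReal⁻¹ * ∫ y in ball x ε, |f y - c| ^ p
      ≤ (ε ^ n * κ)⁻¹ * (ENNReal.ofReal (M / ε ^ n) *
          ENNReal.ofReal ((2 * ε) ^ ((n : ℝ) + s * p)) *
          gagliardoEnergy s p (closedBall x ε) f).toReal := by
        rw [← hvol]
        gcongr
        refine (integral_abs_rpow_le_toReal_lintegral (by linarith) _).trans
          (ENNReal.toReal_mono ?_ hbound)
        exact ENNReal.mul_ne_top (ENNReal.mul_ne_top ENNReal.ofReal_ne_top ENNReal.ofReal_ne_top)
          hfin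
    _ = M * 4 ^ n / κ * (gagliardoEnergy s p (closedBall x ε) f).toReal := by
        rw [ENNReal.toReal_mul, ENNReal.toReal_mul, ENNReal.toReal_ofReal (by positivity),
          ENNReal.toReal_ofReal (by positivity), hexp]
        field_simp

end Oscillation

/-- VMO-type property: for f ∈ W^{s,n/s}(Ω) and x ∈ Ω, the mean
oscillation (1/|B_ε(x)|) ∫_{B_ε(x)} |f − f_ε(x)|^{n/s} tends to 0 as ε → 0⁺. -/
theorem fractional_sobolev_vmo
    {n : ℕ} (hn : 1 ≤ n) (Ω : Set (Rn n)) (hΩ : IsOpen Ω)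
    {s : ℝ} (hs1 : 0 < s) (hs2 : s < 1)
    (f : Rn n → ℝ) (hf : MemWsp s ((n : ℝ)/s) Ω f)
    (ψ : Rn n → ℝ) (hψ : IsMollifier ψ) :
    ∀ x ∈ Ω,
      Tendsto (fun ε =>
          (volume (ball x ε)).toReal⁻¹ *
            ∫ y in ball x ε, |f y - mollifyOn Ω ψ ε f x| ^ ((n : ℝ)/s))
        (𝓝[>] (0:ℝ)) (𝓝 0) := by
  intro x hx
  have : NeZero n := ⟨by omega⟩
  have hsn : s ≤ n := hs2.le.trans (by exact_mod_cast hn)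
  have hp : 1 ≤ (n : ℝ) / s := (one_le_div hs1).2 hsn
  obtain ⟨M, hM⟩ :=
    hψ.smooth.continuous.bddAbove_range_of_hasCompactSupport hψ.hasCompactSupport
  have hfloc : LocallyIntegrable (Ω.indicator f) volume :=
    ((memLp_indicator_iff_restrict hΩ.measurableSet).2 hf.1).locallyIntegrable
      (ENNReal.one_le_ofReal.2 hp)
  have hfin := gagliardoEnergy_ne_top (by linarith) hf.2
  have hT : Tendsto (fun ε => (gagliardoEnergy s (n / s) (closedBall x ε) f).toReal)
      (𝓝[>] 0) (𝓝 0) := by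
    simpa [Function.comp_def] using (ENNReal.tendsto_toReal ENNReal.zero_ne_top).comp
      (tendsto_gagliardoEnergy_closedBall (hΩ.mem_nhds hx) hf.1.aestronglyMeasurable hfin)
  obtain ⟨r, hr, hrΩ⟩ := nhds_basis_closedBall.mem_iff.1 (hΩ.mem_nhds hx)
  refine squeeze_zero' (Eventually.of_forall fun ε => by positivity) ?_
    (by simpa using hT.const_mul (M * 4 ^ n / (volume (ball (0 : Rn n) 1)).toReal))
  filter_upwards [Ioo_mem_nhdsGT hr] with ε hε
  have hS : closedBall x ε ⊆ Ω := (closedBall_subset_closedBall hε.2.le).trans hrΩ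
  exact mean_oscillation_mollifyOn_le hψ (fun z => hM ⟨z, rfl⟩) hε.1 hS hfloc hs1 hsn
    (ne_top_of_le_ne_top hfin (gagliardoEnergy_mono hS f))
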